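/- arXiv:2107.04783 — 2 statements merged into one kernel-verified Lean document; each statement's English description precedes it below -/
import Mathlib

section
/- Let Γ and Δ be finite sets, K ≤ Sym(Γ) and L ≤ Sym(Δ), and let the direct product K × L act on the Cartesian product Γ × Δ by (γ, δ)^(k,l) = (γ^k, δ^l). Then for every integer m ≥ 2, (K × L)^(m) = K^(m) × L^(m). -/
open Equiv MulAction Pointwise

/-- The `m`-closure of a permutation group `G ≤ Sym(Ω)`: the largest subgroup of `Sym(Ω)`
having the same orbits as `G` in the induced componentwise action on `Ω^m`. -/
def mClosure {Ω : Type*} (m : ℕ) (G : Subgroup (Equiv.Perm Ω)) : Subgroup (Equiv.Perm Ω) :=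
  sSup {H : Subgroup (Equiv.Perm Ω) |
    ∀ α : Fin m → Ω, MulAction.orbit H α = MulAction.orbit G α}

/-- An ordered partition of `Ω` into at most `m` nonempty classes. -/
structure OrderedPartition (Ω : Type*) (m : ℕ) where
  classes : List (Set Ω)
  length_le : classes.length ≤ m
  nonempty : ∀ s ∈ classes, s.Nonempty
  pairwise_disjoint : classes.Pairwise Disjoint
  covers : ∀ x : Ω, ∃ s ∈ classes, x ∈ s

namespace OrderedPartition

variable {Ω : Type*} {m : ℕ}

theorem ext' {P Q : OrderedPartition Ω m} (h : P.classes = Q.classes) : P = Q := by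
  cases P; cases Q; simpa using h

/-- The natural action of a permutation on an ordered partition, classwise. -/
def act (f : Equiv.Perm Ω) (P : OrderedPartition Ω m) : OrderedPartition Ω m where
  classes := P.classes.map fun s => f '' s
  length_le := by simpa using P.length_le
  nonempty := by
    intro s hs
    obtain ⟨t, ht, rfl⟩ := List.mem_map.mp hs
    exact (P.nonempty t ht).image _
  pairwise_disjoint :=
    P.pairwise_disjoint.map _ fun s t h => (Set.disjoint_image_iff f.injective).mpr h
  covers := by
    intro x
    obtain ⟨s, hs, hx⟩ := P.covers (f⁻¹ x)
    exact ⟨f '' s, List.mem_map_of_mem hs, f⁻¹ x, hx, by simp⟩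

instance : SMul (Equiv.Perm Ω) (OrderedPartition Ω m) := ⟨act⟩

theorem smul_classes (f : Equiv.Perm Ω) (P : OrderedPartition Ω m) :
    (f • P).classes = P.classes.map fun s => f '' s := rfl

instance : MulAction (Equiv.Perm Ω) (OrderedPartition Ω m) where
  one_smul P := ext' (by simp [smul_classes])
  mul_smul f g P := ext' (by
    simp [smul_classes, List.map_map, Function.comp_def, Set.image_image])

end OrderedPartition

/-- The partition `m`-closure `G^[m]` of a permutation group `G ≤ Sym(Ω)`: the largest
subgroup of `Sym(Ω)` having the same orbits as `G` in its induced action on the set of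
ordered partitions of `Ω` into at most `m` nonempty classes. -/
def partClosure {Ω : Type*} (m : ℕ) (G : Subgroup (Equiv.Perm Ω)) : Subgroup (Equiv.Perm Ω) :=
  sSup {H : Subgroup (Equiv.Perm Ω) |
    ∀ P : OrderedPartition Ω m, MulAction.orbit H P = MulAction.orbit G P}

/-- The element `(g_1, …, g_d; ḡ)` of the wreath product in product action:
`(ω^g)_i = (ω_{i^{ḡ⁻¹}})^{g_{i^{ḡ⁻¹}}}`. -/
def wreathElem {Γ Δ : Type*} (gs : Δ → Equiv.Perm Γ) (σ : Equiv.Perm Δ) :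
    Equiv.Perm (Δ → Γ) where
  toFun ω i := gs (σ⁻¹ i) (ω (σ⁻¹ i))
  invFun ω i := (gs i)⁻¹ (ω (σ i))
  left_inv ω := by funext i; simp
  right_inv ω := by funext i; simp

theorem wreathElem_apply {Γ Δ : Type*} (gs : Δ → Equiv.Perm Γ) (σ : Equiv.Perm Δ)
    (ω : Δ → Γ) (i : Δ) : wreathElem gs σ ω i = gs (σ⁻¹ i) (ω (σ⁻¹ i)) := rfl

theorem wreathElem_one {Γ Δ : Type*} :
    wreathElem (fun _ : Δ => (1 : Equiv.Perm Γ)) 1 = 1 := by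
  refine Equiv.ext fun ω => funext fun i => ?_
  simp [wreathElem_apply]

theorem wreathElem_mul {Γ Δ : Type*} (gs hs : Δ → Equiv.Perm Γ) (σ τ : Equiv.Perm Δ) :
    wreathElem gs σ * wreathElem hs τ = wreathElem (fun j => gs (τ j) * hs j) (σ * τ) := by
  refine Equiv.ext fun ω => funext fun i => ?_
  simp [wreathElem_apply, Equiv.Perm.mul_apply, mul_inv_rev]

theorem wreathElem_inv {Γ Δ : Type*} (gs : Δ → Equiv.Perm Γ) (σ : Equiv.Perm Δ) :
    (wreathElem gs σ)⁻¹ = wreathElem (fun j => (gs (σ⁻¹ j))⁻¹) σ⁻¹ := by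
  rw [inv_eq_iff_mul_eq_one, wreathElem_mul]
  simpa using wreathElem_one

/-- The wreath product `K ↑ L` of `K ≤ Sym(Γ)` and `L ≤ Sym(Δ)` in product action,
as a subgroup of `Sym(Γ^Δ)`. -/
def wreathProduct {Γ Δ : Type*} (K : Subgroup (Equiv.Perm Γ)) (L : Subgroup (Equiv.Perm Δ)) :
    Subgroup (Equiv.Perm (Δ → Γ)) where
  carrier := {h | ∃ (gs : Δ → Equiv.Perm Γ) (σ : Equiv.Perm Δ),
    (∀ i, gs i ∈ K) ∧ σ ∈ L ∧ h = wreathElem gs σ}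
  one_mem' := ⟨fun _ => 1, 1, fun _ => K.one_mem, L.one_mem, wreathElem_one.symm⟩
  mul_mem' := by
    rintro f h ⟨gs, σ, hgs, hσ, rfl⟩ ⟨hs, τ, hhs, hτ, rfl⟩
    exact ⟨fun j => gs (τ j) * hs j, σ * τ, fun j => K.mul_mem (hgs _) (hhs _),
      L.mul_mem hσ hτ, wreathElem_mul gs hs σ τ⟩
  inv_mem' := by
    rintro f ⟨gs, σ, hgs, hσ, rfl⟩
    exact ⟨fun j => (gs (σ⁻¹ j))⁻¹, σ⁻¹, fun j => K.inv_mem (hgs _), L.inv_mem hσ,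
      wreathElem_inv gs σ⟩

/-- `k_m`: the number of orbits of `K ≤ Sym(Γ)` in its componentwise action on `Γ^m`. -/
noncomputable def numOrbits {Γ : Type*} (m : ℕ) (K : Subgroup (Equiv.Perm Γ)) : ℕ :=
  Nat.card (MulAction.orbitRel.Quotient K (Fin m → Γ))

/-- A permutation group `L ≤ Sym(Δ)` is primitive if it is transitive and preserves
no nontrivial partition of `Δ` (partitions being identified with equivalence relations). -/
def IsPrimitiveSubgroup {Δ : Type*} (L : Subgroup (Equiv.Perm Δ)) : Prop :=
  (∀ x y : Δ, ∃ g ∈ L, g x = y) ∧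
  ∀ r : Setoid Δ, (∀ g ∈ L, ∀ x y : Δ, r.r x y → r.r (g x) (g y)) → r = ⊥ ∨ r = ⊤

/-- The direct product `K × L ≤ Sym(Γ × Δ)` acting coordinatewise on `Γ × Δ`. -/
def prodSubgroup {Γ Δ : Type*} (K : Subgroup (Equiv.Perm Γ)) (L : Subgroup (Equiv.Perm Δ)) :
    Subgroup (Equiv.Perm (Γ × Δ)) where
  carrier := {h | ∃ k ∈ K, ∃ l ∈ L, h = Equiv.prodCongr k l}
  one_mem' := ⟨1, K.one_mem, 1, L.one_mem, Equiv.ext fun x => rfl⟩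
  mul_mem' := by
    rintro f h ⟨k₁, hk₁, l₁, hl₁, rfl⟩ ⟨k₂, hk₂, l₂, hl₂, rfl⟩
    exact ⟨k₁ * k₂, K.mul_mem hk₁ hk₂, l₁ * l₂, L.mul_mem hl₁ hl₂, Equiv.ext fun x => rfl⟩
  inv_mem' := by
    rintro f ⟨k, hk, l, hl, rfl⟩
    exact ⟨k⁻¹, K.inv_mem hk, l⁻¹, L.inv_mem hl, Equiv.ext fun x => rfl⟩

/-- Given an enumeration (via `sIdx`) of the orbits of `K` on `Γ^m` by `Fin a`,
and `α ∈ Ω^m` with `Ω = Γ^d` viewed as a `d × m` matrix with rows `α[i] = (j ↦ α j i)`,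
`piClasses sIdx α` is the ordered partition `Π(α)` of `Δ = Fin d` whose `ℓ`-th class
consists of the `i` whose row `α[i]` lies in the orbit with the `ℓ`-th smallest
occurring index. -/
def piClasses {Γ : Type*} {d m a : ℕ} (sIdx : (Fin m → Γ) → Fin a)
    (α : Fin m → (Fin d → Γ)) : List (Set (Fin d)) :=
  ((Finset.univ.image fun i : Fin d => sIdx fun j => α j i).sort (· ≤ ·)).map
    fun t => {i : Fin d | sIdx (fun j => α j i) = t}

/-! A permutation in `(K × L)^(m)` with `m ≥ 2` agrees on every pair of points with some
`(k, l) ∈ K × L`, so it preserves both fibrations of `Γ × Δ` and hence is a product `(a, b)` of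
permutations. Testing `(a, b)` on `m`-tuples with constant second (first) coordinate shows
`a ∈ K^(m)` (`b ∈ L^(m)`); the reverse inclusion is checked coordinatewise. -/

section MClosure

variable {Ω : Type*}

def tuplewiseClosure (m : ℕ) (G : Subgroup (Perm Ω)) : Subgroup (Perm Ω) where
  carrier := {f | ∀ α : Fin m → Ω, ∃ g ∈ G, g • α = f • α}
  one_mem' α := ⟨1, G.one_mem, rfl⟩
  mul_mem' := by
    rintro f h hf hh α
    obtain ⟨g₂, hg₂, e₂⟩ := hh α
    obtain ⟨g₁, hg₁, e₁⟩ := hf (g₂ • α)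
    exact ⟨g₁ * g₂, G.mul_mem hg₁ hg₂, by rw [mul_smul, e₁, e₂, ← mul_smul]⟩
  inv_mem' := by
    intro f hf α
    obtain ⟨g, hg, e⟩ := hf (f⁻¹ • α)
    refine ⟨g⁻¹, G.inv_mem hg, ?_⟩
    rw [inv_smul_eq_iff, e, smul_inv_smul]

theorem mClosure_eq_tuplewiseClosure (m : ℕ) (G : Subgroup (Perm Ω)) :
    mClosure m G = tuplewiseClosure m G := by
  refine le_antisymm (sSup_le fun H hH f hf α => ?_) (le_sSup fun α => ?_)
  · obtain ⟨g, hg⟩ : f • α ∈ orbit G α := hH α ▸ ⟨⟨f, hf⟩, rfl⟩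
    exact ⟨g, g.2, hg⟩
  · ext x
    constructor
    · rintro ⟨⟨f, hf⟩, rfl⟩
      obtain ⟨g, hg, e⟩ := hf α
      exact ⟨⟨g, hg⟩, e⟩
    · rintro ⟨g, rfl⟩
      exact ⟨⟨g, fun _ => ⟨g, g.2, rfl⟩⟩, rfl⟩

theorem mem_mClosure_iff {m : ℕ} {G : Subgroup (Perm Ω)} {f : Perm Ω} :
    f ∈ mClosure m G ↔ ∀ α : Fin m → Ω, ∃ g ∈ G, g • α = f • α := by
  rw [mClosure_eq_tuplewiseClosure]
  rfl

theorem exists_mem_apply_eq_of_mem_mClosure {m : ℕ} (hm : 2 ≤ m) {G : Subgroup (Perm Ω)}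
    {f : Perm Ω} (hf : f ∈ mClosure m G) (x y : Ω) : ∃ g ∈ G, g x = f x ∧ g y = f y := by
  obtain ⟨g, hg, e⟩ := mem_mClosure_iff.1 hf fun j => if (j : ℕ) = 0 then x else y
  exact ⟨g, hg, by simpa using congrFun e ⟨0, by omega⟩,
    by simpa using congrFun e ⟨1, hm⟩⟩

end MClosure

section ProdSubgroup

variable {Γ Δ : Type*}

theorem Equiv.Perm.exists_eq_prodCongr (f : Perm (Γ × Δ))
    (hfst : ∀ x y, x.1 = y.1 → (f x).1 = (f y).1)
    (hsnd : ∀ x y, x.2 = y.2 → (f x).2 = (f y).2) :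
    ∃ (a : Perm Γ) (b : Perm Δ), f = prodCongr a b := by
  rcases isEmpty_or_nonempty (Γ × Δ) with hE | ⟨γ₀, δ₀⟩
  · exact ⟨1, 1, Equiv.ext fun x => isEmptyElim x⟩
  have hf : ∀ x, f x = ((f (x.1, δ₀)).1, (f (γ₀, x.2)).2) := fun x =>
    Prod.ext (hfst _ _ rfl) (hsnd _ _ rfl)
  have ha : Function.Bijective fun γ => (f (γ, δ₀)).1 := by
    refine ⟨fun γ γ' h => ?_, fun γ => ?_⟩
    · exact (Prod.ext_iff.1 (f.injective (Prod.ext h (hsnd (γ, δ₀) (γ', δ₀) rfl)))).1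
    · obtain ⟨x, hx⟩ := f.surjective (γ, δ₀)
      exact ⟨x.1, (hfst (x.1, δ₀) x rfl).trans (congrArg Prod.fst hx)⟩
  have hb : Function.Bijective fun δ => (f (γ₀, δ)).2 := by
    refine ⟨fun δ δ' h => ?_, fun δ => ?_⟩
    · exact (Prod.ext_iff.1 (f.injective (Prod.ext (hfst (γ₀, δ) (γ₀, δ') rfl) h))).2
    · obtain ⟨x, hx⟩ := f.surjective (γ₀, δ)
      exact ⟨x.2, (hsnd (γ₀, x.2) x rfl).trans (congrArg Prod.snd hx)⟩
  exact ⟨ofBijective _ ha, ofBijective _ hb, Equiv.ext hf⟩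

variable {K : Subgroup (Perm Γ)} {L : Subgroup (Perm Δ)} {m : ℕ}

theorem exists_eq_prodCongr_of_mem_mClosure (hm : 2 ≤ m) {f : Perm (Γ × Δ)}
    (hf : f ∈ mClosure m (prodSubgroup K L)) :
    ∃ (a : Perm Γ) (b : Perm Δ), f = prodCongr a b := by
  refine f.exists_eq_prodCongr (fun x y hxy => ?_) (fun x y hxy => ?_) <;>
  · obtain ⟨g, ⟨k, -, l, -, rfl⟩, hx, hy⟩ := exists_mem_apply_eq_of_mem_mClosure hm hf x y
    rw [← hx, ← hy]
    simp [hxy]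

theorem mem_mClosure_left_of_prodCongr_mem [Nonempty Δ] {a : Perm Γ} {b : Perm Δ}
    (h : prodCongr a b ∈ mClosure m (prodSubgroup K L)) : a ∈ mClosure m K := by
  inhabit Δ
  refine mem_mClosure_iff.2 fun β => ?_
  obtain ⟨_, ⟨k, hk, l, -, rfl⟩, e⟩ := mem_mClosure_iff.1 h fun j => (β j, default)
  exact ⟨k, hk, funext fun j => congrArg Prod.fst (congrFun e j)⟩

theorem mem_mClosure_right_of_prodCongr_mem [Nonempty Γ] {a : Perm Γ} {b : Perm Δ}
    (h : prodCongr a b ∈ mClosure m (prodSubgroup K L)) : b ∈ mClosure m L := by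
  inhabit Γ
  refine mem_mClosure_iff.2 fun β => ?_
  obtain ⟨_, ⟨k, -, l, hl, rfl⟩, e⟩ := mem_mClosure_iff.1 h fun j => (default, β j)
  exact ⟨l, hl, funext fun j => congrArg Prod.snd (congrFun e j)⟩

theorem prodCongr_mem_mClosure_prodSubgroup {a : Perm Γ} {b : Perm Δ} (ha : a ∈ mClosure m K)
    (hb : b ∈ mClosure m L) : prodCongr a b ∈ mClosure m (prodSubgroup K L) := by
  refine mem_mClosure_iff.2 fun α => ?_
  obtain ⟨k, hk, ek⟩ := mem_mClosure_iff.1 ha (Prod.fst ∘ α)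
  obtain ⟨l, hl, el⟩ := mem_mClosure_iff.1 hb (Prod.snd ∘ α)
  exact ⟨prodCongr k l, ⟨k, hk, l, hl, rfl⟩,
    funext fun j => Prod.ext (congrFun ek j) (congrFun el j)⟩

end ProdSubgroup

theorem mClosure_prodSubgroup_general {Γ Δ : Type*}
    (K : Subgroup (Equiv.Perm Γ)) (L : Subgroup (Equiv.Perm Δ)) (m : ℕ) (hm : 2 ≤ m) :
    mClosure m (prodSubgroup K L) = prodSubgroup (mClosure m K) (mClosure m L) := by
  ext f
  constructor
  · intro hf
    obtain ⟨a, b, rfl⟩ := exists_eq_prodCongr_of_mem_mClosure hm hf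
    rcases isEmpty_or_nonempty (Γ × Δ) with hE | hne
    · exact ⟨1, one_mem _, 1, one_mem _, Equiv.ext fun x => isEmptyElim x⟩
    · have := hne.map Prod.fst
      have := hne.map Prod.snd
      exact ⟨a, mem_mClosure_left_of_prodCongr_mem hf, b,
        mem_mClosure_right_of_prodCongr_mem hf, rfl⟩
  · rintro ⟨a, ha, b, hb, rfl⟩
    exact prodCongr_mem_mClosure_prodSubgroup ha hb

/-- **Theorem (direct products).** For `K ≤ Sym(Γ)`, `L ≤ Sym(Δ)` acting coordinatewise on
`Γ × Δ` and every `m ≥ 2`: `(K × L)^(m) = K^(m) × L^(m)`. -/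
theorem mClosure_prodSubgroup {Γ Δ : Type*} [Fintype Γ] [Fintype Δ]
    (K : Subgroup (Equiv.Perm Γ)) (L : Subgroup (Equiv.Perm Δ)) (m : ℕ) (hm : 2 ≤ m) :
    mClosure m (prodSubgroup K L) = prodSubgroup (mClosure m K) (mClosure m L) :=
  mClosure_prodSubgroup_general K L m hm
end

section
/- Let Γ and Δ = {1,…,d} be finite sets, K ≤ Sym(Γ), L ≤ Sym(Δ), and m ≥ 2 an integer. Then (K↑L)^(m) ≤ Sym(Γ) ↑ Sym(Δ); in particular, every element of (K↑L)^(m) can be written in the form h = (h_1,…,h_d; h̄) with h_1,…,h_d ∈ Sym(Γ) and h̄ ∈ Sym(Δ). -/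
open Equiv MulAction Pointwise

/-!
An element of `(K↑L)^(m)` with `m ≥ 2` agrees on each pair of points of `Γ^d` with an element
of `K↑L`, so it is an isometry of the Hamming metric. An isometry `f` of `Γ^d` maps every line
(the points differing from a given one in at most one coordinate `i`) into a line, with a
direction `σ i` that does not depend on the base point, since opposite sides of a square are
parallel. Hence `σ` is a permutation and `f ω (σ i)` depends only on `ω i`, which exhibits `f` as
`(h_1, …, h_d; σ)`.
-/

section UpdateInduction

variable {ι α β : Type*} [DecidableEq ι]

theorem eq_of_update_invariant (F : (ι → α) → β) (t : Finset ι)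
    (hF : ∀ ω, ∀ k ∈ t, ∀ a, F (Function.update ω k a) = F ω) {ω ω' : ι → α}
    (h : ∀ i ∉ t, ω i = ω' i) : F ω = F ω' := by
  induction t using Finset.induction_on generalizing ω with
  | empty => exact congrArg F (funext fun i => h i (Finset.notMem_empty i))
  | insert k t _ ih =>
    rw [← hF ω k (Finset.mem_insert_self k t) (ω' k)]
    refine ih (fun ω l hl a => hF ω l (Finset.mem_insert_of_mem hl) a) fun i hi => ?_
    rcases eq_or_ne i k with rfl | hik
    · exact Function.update_self ..
    · rw [Function.update_of_ne hik]
      exact h i (by simp [hik, hi])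

end UpdateInduction

section HammingLine

variable {ι Γ : Type*}

def hammingLine (i : ι) (ω : ι → Γ) : Set (ι → Γ) := {x | ∀ k, k ≠ i → x k = ω k}

variable {i j j' : ι} {u v w x y z ω : ι → Γ}

theorem self_mem_hammingLine : ω ∈ hammingLine i ω := fun _ _ => rfl

theorem update_mem_hammingLine [DecidableEq ι] (a : Γ) :
    Function.update ω i a ∈ hammingLine i ω := fun _ hk => Function.update_of_ne hk a ω

theorem mem_hammingLine_comm (h : x ∈ hammingLine i ω) : ω ∈ hammingLine i x :=
  fun k hk => (h k hk).symm

theorem mem_hammingLine_trans (hy : y ∈ hammingLine i x) (hz : z ∈ hammingLine i y) :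
    z ∈ hammingLine i x :=
  fun k hk => (hz k hk).trans (hy k hk)

theorem eq_of_mem_hammingLine_of_apply_eq (hx : x ∈ hammingLine j w)
    (hy : y ∈ hammingLine j w) (h : x j = y j) : x = y := by
  funext k
  rcases eq_or_ne k j with rfl | hk
  · exact h
  · rw [hx k hk, hy k hk]

theorem apply_ne_of_mem_hammingLine (hv : v ∈ hammingLine j u) (hne : v ≠ u) : v j ≠ u j :=
  fun h => hne (eq_of_mem_hammingLine_of_apply_eq hv self_mem_hammingLine h)

theorem eq_of_mem_hammingLine_of_ne (hv : v ∈ hammingLine j u) (hv' : v ∈ hammingLine j' u)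
    (hne : v ≠ u) : j = j' := by
  by_contra hjj
  exact apply_ne_of_mem_hammingLine hv hne (hv' j hjj)

variable [Fintype ι] [DecidableEq Γ]

theorem hammingDist_le_one_of_mem_hammingLine (hy : y ∈ hammingLine i x) :
    hammingDist x y ≤ 1 := by
  refine (Finset.card_le_card fun k hk => ?_).trans (Finset.card_singleton i).le
  by_contra hki
  exact (Finset.mem_filter.1 hk).2 (hy k (mt Finset.mem_singleton.2 hki)).symm

theorem one_lt_hammingDist {k l : ι} (hkl : k ≠ l) (hk : x k ≠ y k) (hl : x l ≠ y l) :
    1 < hammingDist x y := by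
  classical
  calc 1 < ({k, l} : Finset ι).card := by rw [Finset.card_pair hkl]; norm_num
    _ ≤ hammingDist x y := Finset.card_le_card fun m hm => by
      rcases Finset.mem_insert.1 hm with rfl | hm
      · simpa
      · simpa [Finset.mem_singleton.1 hm]

theorem mem_hammingLine_of_hammingDist_le_one_of_ne {k : ι} (h : hammingDist x y ≤ 1)
    (hk : x k ≠ y k) : y ∈ hammingLine k x := by
  intro l hlk
  by_contra hl
  exact (one_lt_hammingDist hlk (Ne.symm hl) hk).not_ge h

theorem mem_hammingLine_of_hammingDist_le_one (hv : v ∈ hammingLine j u) (hne : v ≠ u)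
    (hu : hammingDist u w ≤ 1) (hvw : hammingDist v w ≤ 1) : w ∈ hammingLine j u := by
  intro k hkj
  by_contra hk
  have hl := mem_hammingLine_of_hammingDist_le_one_of_ne hu (Ne.symm hk)
  have hvj : v j ≠ w j := by
    rw [hl j (Ne.symm hkj)]
    exact apply_ne_of_mem_hammingLine hv hne
  have hvk : v k ≠ w k := by
    rw [hv k hkj]
    exact Ne.symm hk
  exact (one_lt_hammingDist (Ne.symm hkj) hvj hvk).not_ge hvw

/-- Opposite sides of a square `u v z w` in the Hamming graph are parallel. -/
theorem eq_of_hammingSquare {p q r : ι} (hpq : p ≠ q) (hv : v ∈ hammingLine p u) (hvu : v ≠ u)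
    (hw : w ∈ hammingLine q u) (hwu : w ≠ u) (hz : z ∈ hammingLine r w)
    (hvz : hammingDist v z ≤ 1) (huz : 1 < hammingDist u z) : r = p := by
  by_contra hrp
  rcases eq_or_ne r q with rfl | hrq
  · exact huz.not_ge (hammingDist_le_one_of_mem_hammingLine (mem_hammingLine_trans hw hz))
  · refine (one_lt_hammingDist hpq ?_ ?_).not_ge hvz
    · rw [hz p (Ne.symm hrp), hw p hpq]
      exact apply_ne_of_mem_hammingLine hv hvu
    · rw [hz q (Ne.symm hrq), hv q (Ne.symm hpq)]
      exact Ne.symm (apply_ne_of_mem_hammingLine hw hwu)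

end HammingLine

section HammingIsometry

variable {ι Γ : Type*} [Fintype ι] [DecidableEq Γ]

def IsHammingIsometry (f : (ι → Γ) → ι → Γ) : Prop :=
  ∀ x y, hammingDist (f x) (f y) = hammingDist x y

namespace IsHammingIsometry

variable {f : Perm (ι → Γ)} {i : ι} {x ω : ι → Γ}

theorem symm (hf : IsHammingIsometry f) : IsHammingIsometry f.symm := fun x y => by
  rw [← hf, f.apply_symm_apply, f.apply_symm_apply]

variable [DecidableEq ι]

theorem exists_forall_mem_hammingLine [Nontrivial Γ] (hf : IsHammingIsometry f)
    (ω : ι → Γ) (i : ι) : ∃ j, ∀ x ∈ hammingLine i ω, f x ∈ hammingLine j (f ω) := by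
  obtain ⟨a, ha⟩ := exists_ne (ω i)
  have hupd : Function.update ω i a ∈ hammingLine i ω := update_mem_hammingLine a
  have hne : f (Function.update ω i a) ≠ f ω :=
    f.injective.ne (mt Function.update_eq_self_iff.1 ha)
  obtain ⟨j, hj⟩ := Function.ne_iff.1 hne
  have hv : f (Function.update ω i a) ∈ hammingLine j (f ω) := by
    refine mem_hammingLine_of_hammingDist_le_one_of_ne ?_ (Ne.symm hj)
    rw [hf]
    exact hammingDist_le_one_of_mem_hammingLine hupd
  refine ⟨j, fun x hx => mem_hammingLine_of_hammingDist_le_one hv hne ?_ ?_⟩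
  · rw [hf]
    exact hammingDist_le_one_of_mem_hammingLine hx
  · rw [hf]
    exact hammingDist_le_one_of_mem_hammingLine
      (mem_hammingLine_trans (mem_hammingLine_comm hupd) hx)

/-- `f` maps the line through `ω` in direction `i` into the line through `f ω` in direction
`hf.dir ω i`. -/
noncomputable def dir [Nontrivial Γ] (hf : IsHammingIsometry f) (ω : ι → Γ) (i : ι) : ι :=
  (hf.exists_forall_mem_hammingLine ω i).choose

theorem map_mem_hammingLine_dir [Nontrivial Γ] (hf : IsHammingIsometry f)
    (hx : x ∈ hammingLine i ω) : f x ∈ hammingLine (hf.dir ω i) (f ω) :=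
  (hf.exists_forall_mem_hammingLine ω i).choose_spec x hx

theorem dir_symm_dir [Nontrivial Γ] (hf : IsHammingIsometry f) (ω : ι → Γ) (i : ι) :
    hf.symm.dir (f ω) (hf.dir ω i) = i := by
  obtain ⟨a, ha⟩ := exists_ne (ω i)
  have hupd : Function.update ω i a ∈ hammingLine i ω := update_mem_hammingLine a
  have hback := hf.symm.map_mem_hammingLine_dir (hf.map_mem_hammingLine_dir hupd)
  rw [symm_apply_apply, symm_apply_apply] at hback
  exact (eq_of_mem_hammingLine_of_ne hupd hback (mt Function.update_eq_self_iff.1 ha)).symm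

theorem dir_injective [Nontrivial Γ] (hf : IsHammingIsometry f) (ω : ι → Γ) :
    Function.Injective (hf.dir ω) :=
  Function.LeftInverse.injective (g := hf.symm.dir (f ω)) (hf.dir_symm_dir ω)

theorem dir_update [Nontrivial Γ] (hf : IsHammingIsometry f) (ω : ι → Γ) (k : ι) (a : Γ) :
    hf.dir (Function.update ω k a) = hf.dir ω := by
  rcases eq_or_ne a (ω k) with rfl | ha
  · rw [Function.update_eq_self]
  set ω' := Function.update ω k a
  have hω' : ω' ∈ hammingLine k ω := update_mem_hammingLine a
  have hfω' : f ω' ≠ f ω := f.injective.ne (mt Function.update_eq_self_iff.1 ha)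
  funext i
  rcases eq_or_ne i k with rfl | hik
  · exact eq_of_mem_hammingLine_of_ne
      (mem_hammingLine_comm (hf.map_mem_hammingLine_dir (mem_hammingLine_comm hω')))
      (hf.map_mem_hammingLine_dir hω') hfω'
  -- `f` maps the square `ω, ω[i ↦ b], ω'[i ↦ b], ω'` to a square.
  obtain ⟨b, hb⟩ := exists_ne (ω i)
  have hx : Function.update ω i b ∈ hammingLine i ω := update_mem_hammingLine b
  have hx' : Function.update ω' i b ∈ hammingLine k (Function.update ω i b) := fun l hl => by
    simp only [ω', Function.update_apply, hl, if_false]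
  refine eq_of_hammingSquare ((hf.dir_injective ω).ne hik) (hf.map_mem_hammingLine_dir hx)
    (f.injective.ne (mt Function.update_eq_self_iff.1 hb)) (hf.map_mem_hammingLine_dir hω') hfω'
    (hf.map_mem_hammingLine_dir (update_mem_hammingLine b)) ?_ ?_
  · rw [hf]
    exact hammingDist_le_one_of_mem_hammingLine hx'
  · rw [hf]
    refine one_lt_hammingDist hik ?_ ?_
    · simpa [ω'] using Ne.symm hb
    · simpa [ω', Function.update_of_ne hik.symm] using Ne.symm ha

theorem dir_eq [Nontrivial Γ] (hf : IsHammingIsometry f) (ω ω' : ι → Γ) :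
    hf.dir ω = hf.dir ω' :=
  eq_of_update_invariant hf.dir Finset.univ (fun ω k _ a => hf.dir_update ω k a)
    fun i hi => absurd (Finset.mem_univ i) hi

theorem apply_dir_eq [Nontrivial Γ] (hf : IsHammingIsometry f) (ω₀ : ι → Γ) {ω ω' : ι → Γ}
    (h : ω i = ω' i) : f ω (hf.dir ω₀ i) = f ω' (hf.dir ω₀ i) := by
  refine eq_of_update_invariant (fun ω => f ω (hf.dir ω₀ i)) (Finset.univ.erase i)
    (fun ω k hk a => ?_) fun l hl => ?_
  · have hupd := hf.map_mem_hammingLine_dir (update_mem_hammingLine (ω := ω) (i := k) a)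
    rw [hf.dir_eq ω ω₀] at hupd
    exact hupd _ ((hf.dir_injective ω₀).ne (Finset.ne_of_mem_erase hk).symm)
  · obtain rfl : l = i := by simpa using hl
    exact h

theorem injective_apply_dir_update [Nontrivial Γ] (hf : IsHammingIsometry f) (ω₀ : ι → Γ)
    (i : ι) : Function.Injective fun a => f (Function.update ω₀ i a) (hf.dir ω₀ i) := by
  intro a a' h
  have := f.injective (eq_of_mem_hammingLine_of_apply_eq
    (hf.map_mem_hammingLine_dir (update_mem_hammingLine a))
    (hf.map_mem_hammingLine_dir (update_mem_hammingLine a')) h)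
  simpa using congrFun this i

theorem exists_eq_wreathElem [Finite Γ] (hf : IsHammingIsometry f) :
    ∃ (hs : ι → Perm Γ) (σ : Perm ι), f = wreathElem hs σ := by
  cases subsingleton_or_nontrivial Γ
  · exact ⟨1, 1, Subsingleton.elim _ _⟩
  obtain ⟨ω₀⟩ : Nonempty (ι → Γ) := inferInstance
  let σ := Equiv.ofBijective _ (Finite.injective_iff_bijective.1 (hf.dir_injective ω₀))
  refine ⟨fun i => Equiv.ofBijective _
    (Finite.injective_iff_bijective.1 (hf.injective_apply_dir_update ω₀ i)), σ,
    Equiv.ext fun ω => funext fun j => ?_⟩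
  obtain ⟨i, rfl⟩ := σ.surjective j
  rw [wreathElem_apply, Perm.inv_def, symm_apply_apply]
  exact hf.apply_dir_eq ω₀ (Function.update_self i (ω i) ω₀).symm

end IsHammingIsometry

end HammingIsometry

theorem hammingDist_wreathElem {Γ Δ : Type*} [Fintype Δ] [DecidableEq Γ]
    (gs : Δ → Perm Γ) (σ : Perm Δ) (x y : Δ → Γ) :
    hammingDist (wreathElem gs σ x) (wreathElem gs σ y) = hammingDist x y := by
  change hammingDist (fun i => gs (σ⁻¹ i) (x (σ⁻¹ i))) (fun i => gs (σ⁻¹ i) (y (σ⁻¹ i))) = _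
  rw [hammingDist_comp (fun i => gs (σ⁻¹ i)) fun i => (gs (σ⁻¹ i)).injective]
  exact Finset.card_equiv σ⁻¹ (by simp)

def agreeOnTuples {Ω : Type*} (m : ℕ) (G : Subgroup (Perm Ω)) : Subgroup (Perm Ω) where
  carrier := {h | ∀ α : Fin m → Ω, ∃ g ∈ G, ∀ j, h (α j) = g (α j)}
  one_mem' α := ⟨1, G.one_mem, fun _ => rfl⟩
  mul_mem' := by
    rintro p q hp hq α
    obtain ⟨g', hg', hq'⟩ := hq α
    obtain ⟨g, hg, hp'⟩ := hp fun j => g' (α j)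
    exact ⟨g * g', G.mul_mem hg hg', fun j => by simp only [Perm.mul_apply, hq', hp']⟩
  inv_mem' := by
    rintro p hp α
    obtain ⟨g, hg, hpg⟩ := hp fun j => p⁻¹ (α j)
    refine ⟨g⁻¹, G.inv_mem hg, fun j => ?_⟩
    rw [Perm.eq_inv_iff_eq, ← hpg, Perm.inv_def, apply_symm_apply]

theorem mClosure_le_agreeOnTuples {Ω : Type*} (m : ℕ) (G : Subgroup (Perm Ω)) :
    mClosure m G ≤ agreeOnTuples m G := by
  refine sSup_le fun H hH p hp α => ?_
  obtain ⟨⟨g, hg⟩, hgα⟩ := hH α ▸ mem_orbit α (⟨p, hp⟩ : H)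
  exact ⟨g, hg, fun j => (congrFun hgα j).symm⟩

theorem exists_pair_eq_of_mem_mClosure {Ω : Type*} {m : ℕ} {G : Subgroup (Perm Ω)}
    (hm : 2 ≤ m) {h : Perm Ω} (hh : h ∈ mClosure m G) (x y : Ω) :
    ∃ g ∈ G, h x = g x ∧ h y = g y := by
  obtain ⟨g, hg, hgα⟩ := mClosure_le_agreeOnTuples m G hh fun j => if (j : ℕ) = 0 then x else y
  exact ⟨g, hg, by simpa using hgα ⟨0, by omega⟩, by simpa using hgα ⟨1, hm⟩⟩

theorem isHammingIsometry_of_mem_mClosure {Γ Δ : Type*} [Fintype Δ] [DecidableEq Γ]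
    {K : Subgroup (Perm Γ)} {L : Subgroup (Perm Δ)} {m : ℕ} (hm : 2 ≤ m) {h : Perm (Δ → Γ)}
    (hh : h ∈ mClosure m (wreathProduct K L)) : IsHammingIsometry h := fun x y => by
  obtain ⟨_, ⟨gs, σ, -, -, rfl⟩, hx, hy⟩ := exists_pair_eq_of_mem_mClosure hm hh x y
  rw [hx, hy, hammingDist_wreathElem]

/-- For `m ≥ 2`: `(K↑L)^(m) ≤ Sym(Γ) ↑ Sym(Δ)`; in particular, every element of
`(K↑L)^(m)` is of the form `h = (h_1,…,h_d; h̄)` with `h_i ∈ Sym(Γ)`, `h̄ ∈ Sym(Δ)`. -/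
theorem mClosure_wreath_le_top_wreath {Γ : Type*} [Fintype Γ] {d : ℕ}
    (K : Subgroup (Equiv.Perm Γ)) (L : Subgroup (Equiv.Perm (Fin d)))
    (m : ℕ) (hm : 2 ≤ m) :
    mClosure m (wreathProduct K L) ≤
        wreathProduct (⊤ : Subgroup (Equiv.Perm Γ)) (⊤ : Subgroup (Equiv.Perm (Fin d))) ∧
      ∀ h ∈ mClosure m (wreathProduct K L),
        ∃ (hs : Fin d → Equiv.Perm Γ) (σ : Equiv.Perm (Fin d)), h = wreathElem hs σ := by
  classical
  have hwreath : ∀ h ∈ mClosure m (wreathProduct K L),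
      ∃ (hs : Fin d → Perm Γ) (σ : Perm (Fin d)), h = wreathElem hs σ :=
    fun h hh => (isHammingIsometry_of_mem_mClosure hm hh).exists_eq_wreathElem
  refine ⟨fun h hh => ?_, hwreath⟩
  obtain ⟨hs, σ, rfl⟩ := hwreath h hh
  exact ⟨hs, σ, fun _ => Subgroup.mem_top _, Subgroup.mem_top _, rfl⟩
end
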